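/- arXiv:1610.07830 — 6 statements merged into one kernel-verified Lean document; each statement's English description precedes it below -/
import Mathlib

section
/- Let p be a positive integer, γ > 0, let g, h : ℝ^p → ℝ be convex, let f : ℝ^p → ℝ be differentiable with gradient ∇f, and let x* ∈ ℝ^p. Suppose u is a subgradient of g at x*, v is a subgradient of h at x*, and u + v = −∇f(x*). Set y* = x* + γ·u. Then x* is a proximal point of g at y* with parameter γ, and x* is a proximal point of h at 2x* − y* − γ∇f(x*) with parameter γ. Consequently, if x = x* and z = x* are taken in the three-operator splitting step from y*, the gradient mapping value G(y*) = (x − z)/γ equals 0. -/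
open RealInnerProductSpace

/-- `x` is a proximal point of `φ` at `y` with parameter `γ`:
it minimizes `u ↦ φ u + (1/(2γ)) ‖u - y‖²`. -/
def IsProxPt {p : ℕ} (γ : ℝ) (φ : EuclideanSpace ℝ (Fin p) → ℝ)
    (y x : EuclideanSpace ℝ (Fin p)) : Prop :=
  ∀ u : EuclideanSpace ℝ (Fin p),
    φ x + (1 / (2 * γ)) * ‖x - y‖ ^ 2 ≤ φ u + (1 / (2 * γ)) * ‖u - y‖ ^ 2

/-- `(x, z)` is a three-operator splitting step from `y`. -/
def IsSplitStep {p : ℕ} (γ : ℝ) (g h f : EuclideanSpace ℝ (Fin p) → ℝ)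
    (y x z : EuclideanSpace ℝ (Fin p)) : Prop :=
  IsProxPt γ g y x ∧ IsProxPt γ h ((2 : ℝ) • x - y - γ • gradient f x) z

/-- `f` is `L`-smooth: differentiable with `L`-Lipschitz gradient. -/
def LSmooth {p : ℕ} (L : ℝ) (f : EuclideanSpace ℝ (Fin p) → ℝ) : Prop :=
  Differentiable ℝ f ∧ ∀ a b : EuclideanSpace ℝ (Fin p),
    ‖gradient f a - gradient f b‖ ≤ L * ‖a - b‖

/-- `u` is a subgradient of `φ` at `x`. -/
def IsSubgradient {p : ℕ} (φ : EuclideanSpace ℝ (Fin p) → ℝ)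
    (x u : EuclideanSpace ℝ (Fin p)) : Prop :=
  ∀ w : EuclideanSpace ℝ (Fin p), φ w ≥ φ x + ⟪u, w - x⟫

lemma prox_of_subgrad {p : ℕ} {γ : ℝ} (hγ : 0 < γ)
    (φ : EuclideanSpace ℝ (Fin p) → ℝ) (x u : EuclideanSpace ℝ (Fin p))
    (hu : IsSubgradient φ x u) : IsProxPt γ φ (x + γ • u) x := by
  intro w
  have h1 := hu w
  have hx : x - (x + γ • u) = -(γ • u) := by abel
  have hw : w - (x + γ • u) = (w - x) - γ • u := by abel
  rw [hx, hw, norm_neg]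
  have hexp : ‖(w - x) - γ • u‖ ^ 2 = ‖w - x‖ ^ 2 - 2 * (γ * ⟪u, w - x⟫) + γ ^ 2 * ‖u‖ ^ 2 := by
    rw [norm_sub_sq_real, real_inner_smul_right, norm_smul, real_inner_comm]
    simp [abs_of_pos hγ, mul_pow]
  have hgu : ‖γ • u‖ ^ 2 = γ ^ 2 * ‖u‖ ^ 2 := by
    rw [norm_smul]; simp [abs_of_pos hγ, mul_pow]
  rw [hexp, hgu]
  have hnn : (0:ℝ) ≤ ‖w - x‖ ^ 2 := sq_nonneg _
  have hγ' : (0:ℝ) < 2 * γ := by linarith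
  rw [ge_iff_le] at h1
  have key : (1 / (2 * γ)) * (γ ^ 2 * ‖u‖ ^ 2) ≤
      ⟪u, w - x⟫ + (1 / (2 * γ)) * (‖w - x‖ ^ 2 - 2 * (γ * ⟪u, w - x⟫) + γ ^ 2 * ‖u‖ ^ 2) := by
    rw [div_mul_eq_mul_div, div_mul_eq_mul_div, ← sub_nonneg]
    have : ⟪u, w - x⟫ + 1 * (‖w - x‖ ^ 2 - 2 * (γ * ⟪u, w - x⟫) + γ ^ 2 * ‖u‖ ^ 2) / (2 * γ)
        - 1 * (γ ^ 2 * ‖u‖ ^ 2) / (2 * γ) = ‖w - x‖ ^ 2 / (2 * γ) := by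
      field_simp; ring
    rw [this]
    positivity
  linarith

/-- fixed-point characterization of minimizers. -/
theorem stmt_0 (p : ℕ) (hp : 0 < p) (γ : ℝ) (hγ : 0 < γ)
    (g h f : EuclideanSpace ℝ (Fin p) → ℝ)
    (hg : ConvexOn ℝ Set.univ g) (hh : ConvexOn ℝ Set.univ h)
    (hf : Differentiable ℝ f)
    (xstar u v : EuclideanSpace ℝ (Fin p))
    (hu : IsSubgradient g xstar u) (hv : IsSubgradient h xstar v)
    (huv : u + v = -gradient f xstar)
    (ystar : EuclideanSpace ℝ (Fin p)) (hystar : ystar = xstar + γ • u) :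
    IsProxPt γ g ystar xstar ∧
    IsProxPt γ h ((2 : ℝ) • xstar - ystar - γ • gradient f xstar) xstar ∧
    γ⁻¹ • (xstar - xstar) = (0 : EuclideanSpace ℝ (Fin p)) := by
  have h2 : (2 : ℝ) • xstar - ystar - γ • gradient f xstar = xstar + γ • v := by
    rw [hystar]
    have : v = -gradient f xstar - u := by rw [← huv]; abel
    rw [this, smul_sub, smul_neg, two_smul]
    abel
  refine ⟨?_, ?_, ?_⟩
  · rw [hystar]; exact prox_of_subgrad hγ g xstar u hu
  · rw [h2]; exact prox_of_subgrad hγ h xstar v hv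
  · simp
end

section
/- Let p be a positive integer, γ > 0, let g, h : ℝ^p → ℝ be convex, and let f : ℝ^p → ℝ be differentiable with gradient ∇f. Let y, ỹ ∈ ℝ^p and let (x, z) and (x̃, z̃) be three-operator splitting steps from y and ỹ respectively. Then ⟨(x − z) − (x̃ − z̃), y − ỹ⟩ ≥ ‖(x − z) − (x̃ − z̃)‖² + γ⟨∇f(x) − ∇f(x̃), z − z̃⟩. -/
open RealInnerProductSpace

lemma prox_subgrad {p : ℕ} {γ : ℝ} (hγ : 0 < γ) {φ : EuclideanSpace ℝ (Fin p) → ℝ}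
    (hφ : ConvexOn ℝ Set.univ φ) {y x : EuclideanSpace ℝ (Fin p)}
    (hx : IsProxPt γ φ y x) : IsSubgradient φ x (γ⁻¹ • (y - x)) := by
  intro w
  have key : ∀ t : ℝ, 0 < t → t ≤ 1 →
      φ x ≤ φ w + (1/γ) * ⟪x - y, w - x⟫ + (1/(2*γ)) * t * ‖w - x‖^2 := by
    intro t ht ht1
    have h1 := hx (x + t • (w - x))
    have hconv := hφ.2 (Set.mem_univ x) (Set.mem_univ w)
      (by linarith : (0:ℝ) ≤ 1 - t) (le_of_lt ht) (by ring)
    have heq : (1-t) • x + t • w = x + t • (w - x) := by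
      rw [smul_sub, sub_smul, one_smul]; abel
    rw [heq] at hconv
    have hnorm : ‖x + t • (w - x) - y‖^2
        = ‖x - y‖^2 + 2*t*⟪x - y, w - x⟫ + t^2 * ‖w - x‖^2 := by
      have h2 : x + t • (w - x) - y = (x - y) + t • (w - x) := by abel
      rw [h2, norm_add_sq_real, real_inner_smul_right, norm_smul]
      simp [abs_of_pos ht]; ring
    rw [hnorm] at h1
    have hγ' : (0:ℝ) < 1/(2*γ) := by positivity
    have h3 : t * φ x ≤ t * (φ w + (1/γ) * ⟪x - y, w - x⟫ + (1/(2*γ)) * t * ‖w - x‖^2) := by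
      simp only [smul_eq_mul] at hconv
      have e : (1/(2*γ)) * (2*t) = t * (1/γ) := by field_simp
      ring_nf at h1 ⊢
      nlinarith [h1, hconv]
    exact le_of_mul_le_mul_left (by linarith [h3]) ht
  have hmain : φ x ≤ φ w + (1/γ) * ⟪x - y, w - x⟫ := by
    by_cases hwx : w = x
    · simp [hwx]
    · have hN : (0:ℝ) < ‖w - x‖^2 := by
        have h0 : w - x ≠ 0 := sub_ne_zero.mpr hwx
        exact pow_pos (norm_pos_iff.mpr h0) 2
      refine le_of_forall_pos_le_add ?_
      intro ε hε
      set t := min 1 (2*γ*ε/‖w - x‖^2) with htdef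
      have ht : 0 < t := lt_min one_pos (div_pos (mul_pos (mul_pos two_pos hγ) hε) hN)
      have h4 := key t ht (min_le_left _ _)
      have h5 : (1/(2*γ)) * t * ‖w - x‖^2 ≤ ε := by
        have htle : t ≤ 2*γ*ε/‖w - x‖^2 := min_le_right _ _
        rw [div_eq_mul_inv] at htle
        have := mul_le_mul_of_nonneg_right htle (le_of_lt hN)
        rw [mul_assoc, inv_mul_cancel₀ (ne_of_gt hN), mul_one] at this
        calc (1/(2*γ)) * t * ‖w - x‖^2 = (1/(2*γ)) * (t * ‖w - x‖^2) := by ring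
          _ ≤ (1/(2*γ)) * (2*γ*ε) := by
              apply mul_le_mul_of_nonneg_left this (by positivity)
          _ = ε := by field_simp
      linarith
  have e : ⟪γ⁻¹ • (y - x), w - x⟫ = -((1/γ) * ⟪x - y, w - x⟫) := by
    rw [real_inner_smul_left, show y - x = -(x - y) by abel, inner_neg_left]
    field_simp
  rw [ge_iff_le, e]
  linarith

lemma subgrad_mono {p : ℕ} {φ : EuclideanSpace ℝ (Fin p) → ℝ}
    {x x' u u' : EuclideanSpace ℝ (Fin p)}
    (h1 : IsSubgradient φ x u) (h2 : IsSubgradient φ x' u') :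
    0 ≤ ⟪u - u', x - x'⟫ := by
  have a := h1 x'
  have b := h2 x
  have e0 : ⟪u, x - x'⟫ = -⟪u, x' - x⟫ := by
    rw [show x - x' = -(x' - x) by abel, inner_neg_right]
  have e1 : ⟪u - u', x - x'⟫ = -⟪u, x' - x⟫ - ⟪u', x - x'⟫ := by
    rw [inner_sub_left, e0]
  linarith [a, b, e1.ge, e1.le]

/-- master inequality for the three-operator splitting. -/
theorem stmt_1 (p : ℕ) (hp : 0 < p) (γ : ℝ) (hγ : 0 < γ)
    (g h f : EuclideanSpace ℝ (Fin p) → ℝ)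
    (hg : ConvexOn ℝ Set.univ g) (hh : ConvexOn ℝ Set.univ h)
    (hf : Differentiable ℝ f)
    (y yt x z xt zt : EuclideanSpace ℝ (Fin p))
    (hstep : IsSplitStep γ g h f y x z)
    (hstept : IsSplitStep γ g h f yt xt zt) :
    ⟪(x - z) - (xt - zt), y - yt⟫ ≥
      ‖(x - z) - (xt - zt)‖ ^ 2 +
        γ * ⟪gradient f x - gradient f xt, z - zt⟫ := by
  obtain ⟨hgx, hhz⟩ := hstep
  obtain ⟨hgxt, hhzt⟩ := hstept
  have m1 := subgrad_mono (prox_subgrad hγ hg hgx) (prox_subgrad hγ hg hgxt)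
  have m2 := subgrad_mono (prox_subgrad hγ hh hhz) (prox_subgrad hγ hh hhzt)
  rw [← smul_sub, real_inner_smul_left] at m1 m2
  have hγi : (0:ℝ) < γ⁻¹ := inv_pos.mpr hγ
  have m1' : 0 ≤ ⟪(y - x) - (yt - xt), x - xt⟫ := nonneg_of_mul_nonneg_right m1 hγi
  have m2' : 0 ≤ ⟪((2:ℝ) • x - y - γ • gradient f x - z)
      - ((2:ℝ) • xt - yt - γ • gradient f xt - zt), z - zt⟫ :=
    nonneg_of_mul_nonneg_right m2 hγi
  rw [ge_iff_le, ← real_inner_self_eq_norm_sq]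
  set gx := gradient f x
  set gxt := gradient f xt
  simp only [inner_sub_left, inner_sub_right, real_inner_smul_left] at m1' m2' ⊢
  linarith [real_inner_comm x y, real_inner_comm x yt, real_inner_comm xt y,
    real_inner_comm xt yt, real_inner_comm z y, real_inner_comm z yt,
    real_inner_comm zt y, real_inner_comm zt yt, real_inner_comm x z,
    real_inner_comm x zt, real_inner_comm xt z, real_inner_comm xt zt,
    m1', m2']
end

section
/- Let p be a positive integer, γ > 0, let g, h : ℝ^p → ℝ be convex, and let f : ℝ^p → ℝ be convex and L-smooth with L > 0. Let y ∈ ℝ^p, let (x, z) be a three-operator splitting step from y, set y⁺ = y − x + z, and let (x⁺, z⁺) be a three-operator splitting step from y⁺. With G(y) = (x − z)/γ and G(y⁺) = (x⁺ − z⁺)/γ, it holds that ‖G(y⁺)‖² ≤ ‖G(y)‖² − (1 − γL/2)·‖G(y⁺) − G(y)‖². -/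
open RealInnerProductSpace

/-! Write `d = x - z`, `a = x⁺ - x`, `b = z⁺ - z` and `Δ = ∇f x⁺ - ∇f x`, so that
`x⁺ - z⁺ = d + a - b`. A proximal step produces a subgradient, and subdifferentials are monotone:
for `g` this gives `⟪d + a, a⟫ ≤ 0`, for `h` it gives `0 ≤ ⟪2a + d - γΔ - b, b⟫`. The Baillon–Haddad
theorem `‖Δ‖² ≤ L⟪Δ, a⟫` bounds the remaining cross term, `-⟪Δ, b⟫ ≤ L/4 ‖a - b‖²`, and expanding
`‖d + a - b‖²` gives the inequality for `γ G`. -/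

open Set Filter Topology

lemma le_of_forall_mem_Ioc_le_add_mul {a b c : ℝ} (h : ∀ t ∈ Ioc (0 : ℝ) 1, a ≤ b + t * c) :
    a ≤ b := by
  have hlim : Tendsto (fun t : ℝ => b + t * c) (𝓝[>] 0) (𝓝 b) :=
    ((by fun_prop : Continuous fun t : ℝ => b + t * c).tendsto' 0 b (by simp)).mono_left
      nhdsWithin_le_nhds
  exact ge_of_tendsto hlim (by filter_upwards [Ioc_mem_nhdsGT one_pos] using h)

section InnerProduct

variable {E : Type*} [NormedAddCommGroup E] [InnerProductSpace ℝ E]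

lemma neg_inner_le_of_sq_norm_le_inner {L : ℝ} (hL : 0 < L) {Δ a : E}
    (hΔ : ‖Δ‖ ^ 2 ≤ L * ⟪Δ, a⟫) (b : E) :
    -⟪Δ, b⟫ ≤ L / 4 * ‖a - b‖ ^ 2 := by
  have hsq : 0 ≤ ‖Δ - (L / 2) • (a - b)‖ ^ 2 := sq_nonneg _
  rw [norm_sub_sq_real, norm_smul, real_inner_smul_right, inner_sub_right, Real.norm_eq_abs,
    abs_of_pos (half_pos hL)] at hsq
  nlinarith

lemma sq_norm_add_sub_le {γ L : ℝ} (hγ : 0 ≤ γ) (hL : 0 < L) {d a b Δ : E}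
    (ha : 0 ≤ ⟪-(d + a), a⟫) (hb : 0 ≤ ⟪(2 : ℝ) • a + d - γ • Δ - b, b⟫)
    (hΔ : ‖Δ‖ ^ 2 ≤ L * ⟪Δ, a⟫) :
    ‖d + a - b‖ ^ 2 ≤ ‖d‖ ^ 2 - (1 - γ * L / 2) * ‖a - b‖ ^ 2 := by
  have hγΔ := mul_le_mul_of_nonneg_left (neg_inner_le_of_sq_norm_le_inner hL hΔ b) hγ
  have hab := norm_sub_sq_real a b
  rw [add_sub_assoc, norm_add_sq_real, inner_sub_right]
  simp only [inner_neg_left, inner_add_left, inner_sub_left, real_inner_smul_left,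
    real_inner_self_eq_norm_sq] at ha hb
  linarith

section Smooth

variable [CompleteSpace E] {f : E → ℝ} {f' : E → E}

lemma HasGradientAt.hasDerivAt_add_smul {a d : E} {t : ℝ}
    (hf : HasGradientAt f (f' (a + t • d)) (a + t • d)) :
    HasDerivAt (fun s : ℝ => f (a + s • d)) ⟪f' (a + t • d), d⟫ t := by
  have hline : HasDerivAt (fun s : ℝ => a + s • d) d t := by
    simpa using ((hasDerivAt_id t).smul_const d).const_add a
  simpa [InnerProductSpace.toDual_apply_apply, Function.comp_def] using
    hf.hasFDerivAt.comp_hasDerivAt t hline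

lemma ConvexOn.add_inner_le_of_hasGradientAt (hconv : ConvexOn ℝ univ f) {a : E}
    (hf : HasGradientAt f (f' a) a) (b : E) :
    f a + ⟪f' a, b - a⟫ ≤ f b := by
  have hline : ConvexOn ℝ univ (fun t : ℝ => f (a + t • (b - a))) := by
    simpa [Function.comp_def, AffineMap.lineMap_apply_module', add_comm] using
      hconv.comp_affineMap (AffineMap.lineMap a b)
  have hderiv := HasGradientAt.hasDerivAt_add_smul (t := 0) (d := b - a) (by simpa using hf)
  have := hline.le_slope_of_hasDerivAt (mem_univ 0) (mem_univ 1) one_pos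
    (by simpa using hderiv)
  rw [slope_def_field] at this
  simp only [zero_smul, add_zero, one_smul, add_sub_cancel, sub_zero, div_one] at this
  linarith

lemma le_add_inner_add_of_lipschitz_gradient {L : ℝ} (hf : ∀ u, HasGradientAt f (f' u) u)
    (hlip : ∀ u v, ‖f' u - f' v‖ ≤ L * ‖u - v‖) (a b : E) :
    f b ≤ f a + ⟪f' a, b - a⟫ + L / 2 * ‖b - a‖ ^ 2 := by
  set d := b - a
  let ψ : ℝ → ℝ := fun t => f (a + t • d) - t * ⟪f' a, d⟫ - L / 2 * t ^ 2 * ‖d‖ ^ 2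
  have hψ : ∀ t, HasDerivAt ψ (⟪f' (a + t • d), d⟫ - ⟪f' a, d⟫ - L * t * ‖d‖ ^ 2) t := by
    intro t
    have hsq := ((hasDerivAt_pow 2 t).const_mul (L / 2)).mul_const (‖d‖ ^ 2)
    refine (((hf _).hasDerivAt_add_smul.sub
      ((hasDerivAt_id t).mul_const ⟪f' a, d⟫)).sub hsq).congr_deriv ?_
    ring
  have hanti : AntitoneOn ψ (Icc 0 1) := by
    refine antitoneOn_of_deriv_nonpos (convex_Icc 0 1)
      (fun t _ => (hψ t).continuousAt.continuousWithinAt)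
      (fun t _ => (hψ t).differentiableAt.differentiableWithinAt) fun t ht => ?_
    rw [interior_Icc] at ht
    have hstep : ‖f' (a + t • d) - f' a‖ ≤ L * (t * ‖d‖) := by
      simpa [norm_smul, abs_of_pos ht.1] using hlip (a + t • d) a
    have hcs := real_inner_le_norm (f' (a + t • d) - f' a) d
    rw [inner_sub_left] at hcs
    rw [(hψ t).deriv]
    nlinarith [norm_nonneg d]
  have := hanti (left_mem_Icc.2 zero_le_one) (right_mem_Icc.2 zero_le_one) zero_le_one
  simp only [ψ] at this
  norm_num [show a + d = b from add_sub_cancel a b] at this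
  linarith

-- Convexity at `v` and the descent lemma at `u`, both evaluated at the gradient step from `u`.
lemma ConvexOn.add_inner_add_sq_norm_le {L : ℝ} (hconv : ConvexOn ℝ univ f) (hL : 0 < L)
    (hf : ∀ u, HasGradientAt f (f' u) u) (hlip : ∀ u v, ‖f' u - f' v‖ ≤ L * ‖u - v‖) (u v : E) :
    f v + ⟪f' v, u - v⟫ + 1 / (2 * L) * ‖f' u - f' v‖ ^ 2 ≤ f u := by
  set w := u - L⁻¹ • (f' u - f' v)
  have hlow := hconv.add_inner_le_of_hasGradientAt (hf v) w
  have hup := le_add_inner_add_of_lipschitz_gradient hf hlip u w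
  have hw : w - u = -(L⁻¹ • (f' u - f' v)) := by simp [w]
  have hsplit : w - v = (u - v) + (w - u) := by abel
  rw [hsplit, inner_add_right] at hlow
  rw [hw, norm_neg, norm_smul, Real.norm_eq_abs, abs_of_pos (inv_pos.2 hL)] at hup
  rw [hw] at hlow
  simp only [inner_neg_right, real_inner_smul_right] at hlow hup
  have hnorm : ⟪f' u, f' u - f' v⟫ - ⟪f' v, f' u - f' v⟫ = ‖f' u - f' v‖ ^ 2 := by
    rw [← inner_sub_left, real_inner_self_eq_norm_sq]
  have hsq : L / 2 * (L⁻¹ * ‖f' u - f' v‖) ^ 2 = 1 / (2 * L) * ‖f' u - f' v‖ ^ 2 := by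
    field_simp
  rw [hsq] at hup
  linear_combination hlow + hup - L⁻¹ * hnorm

lemma ConvexOn.sq_norm_sub_le_inner_of_lipschitz_gradient {L : ℝ} (hconv : ConvexOn ℝ univ f)
    (hL : 0 < L) (hf : ∀ u, HasGradientAt f (f' u) u)
    (hlip : ∀ u v, ‖f' u - f' v‖ ≤ L * ‖u - v‖) (a b : E) :
    ‖f' a - f' b‖ ^ 2 ≤ L * ⟪f' a - f' b, a - b⟫ := by
  have hab := hconv.add_inner_add_sq_norm_le hL hf hlip a b
  have hba := hconv.add_inner_add_sq_norm_le hL hf hlip b a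
  rw [norm_sub_rev] at hba
  have hinner : ⟪f' a - f' b, a - b⟫ = -⟪f' a, b - a⟫ - ⟪f' b, a - b⟫ := by
    rw [inner_sub_left, ← neg_sub a b, inner_neg_right]; ring
  rw [hinner]
  field_simp at hab hba
  nlinarith

end Smooth

end InnerProduct

section Prox

variable {p : ℕ} {γ : ℝ} {φ : EuclideanSpace ℝ (Fin p) → ℝ}

lemma IsProxPt.isSubgradient (hγ : 0 < γ) (hφ : ConvexOn ℝ univ φ)
    {y x : EuclideanSpace ℝ (Fin p)} (hx : IsProxPt γ φ y x) :
    IsSubgradient φ x (γ⁻¹ • (y - x)) := by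
  intro w
  refine le_of_forall_mem_Ioc_le_add_mul (c := ‖w - x‖ ^ 2 / (2 * γ)) fun t ht => ?_
  have hprox := hx (x + t • (w - x))
  have hconv : φ (x + t • (w - x)) ≤ (1 - t) * φ x + t * φ w := by
    simpa [show x + t • (w - x) = (1 - t) • x + t • w by module] using
      hφ.2 (mem_univ x) (mem_univ w) (sub_nonneg.2 ht.2) ht.1.le (by ring)
  have hexpand : ‖x + t • (w - x) - y‖ ^ 2
      = ‖x - y‖ ^ 2 + 2 * t * ⟪x - y, w - x⟫ + t ^ 2 * ‖w - x‖ ^ 2 := by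
    rw [show x + t • (w - x) - y = (x - y) + t • (w - x) by abel, norm_add_sq_real,
      real_inner_smul_right, norm_smul, Real.norm_eq_abs, abs_of_pos ht.1, mul_pow]
    ring
  have hinner : ⟪γ⁻¹ • (y - x), w - x⟫ = -(γ⁻¹ * ⟪x - y, w - x⟫) := by
    rw [real_inner_smul_left, ← neg_sub x y, inner_neg_left]; ring
  rw [hexpand] at hprox
  rw [hinner]
  refine le_of_mul_le_mul_left ?_ ht.1
  field_simp at hprox ⊢
  nlinarith

lemma IsSubgradient.inner_sub_nonneg {x u x' u' : EuclideanSpace ℝ (Fin p)}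
    (h : IsSubgradient φ x u) (h' : IsSubgradient φ x' u') :
    0 ≤ ⟪u' - u, x' - x⟫ := by
  have h₁ := h x'
  have h₂ := h' x
  rw [← neg_sub x' x, inner_neg_right] at h₂
  rw [inner_sub_left]
  linarith

lemma IsProxPt.inner_sub_nonneg (hγ : 0 < γ) (hφ : ConvexOn ℝ univ φ)
    {y x y' x' : EuclideanSpace ℝ (Fin p)} (hx : IsProxPt γ φ y x) (hx' : IsProxPt γ φ y' x') :
    0 ≤ ⟪(y' - x') - (y - x), x' - x⟫ := by
  have := (hx.isSubgradient hγ hφ).inner_sub_nonneg (hx'.isSubgradient hγ hφ)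
  rwa [← smul_sub, real_inner_smul_left, mul_nonneg_iff_of_pos_left (inv_pos.2 hγ)] at this

end Prox

theorem stmt_2_general (p : ℕ) (γ : ℝ) (hγ : 0 < γ) (L : ℝ) (hL : 0 < L)
    (g h f : EuclideanSpace ℝ (Fin p) → ℝ)
    (hg : ConvexOn ℝ Set.univ g) (hh : ConvexOn ℝ Set.univ h)
    (hf : ConvexOn ℝ Set.univ f) (hfL : LSmooth L f)
    (y x z yplus xplus zplus : EuclideanSpace ℝ (Fin p))
    (hstep : IsSplitStep γ g h f y x z)
    (hyplus : yplus = y - x + z)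
    (hstepplus : IsSplitStep γ g h f yplus xplus zplus) :
    ‖γ⁻¹ • (xplus - zplus)‖ ^ 2 ≤
      ‖γ⁻¹ • (x - z)‖ ^ 2 -
        (1 - γ * L / 2) * ‖γ⁻¹ • (xplus - zplus) - γ⁻¹ • (x - z)‖ ^ 2 := by
  obtain ⟨hdiff, hlip⟩ := hfL
  subst hyplus
  have hg_mono := hstep.1.inner_sub_nonneg hγ hg hstepplus.1
  have hh_mono := hstep.2.inner_sub_nonneg hγ hh hstepplus.2
  have hcoco := hf.sq_norm_sub_le_inner_of_lipschitz_gradient hL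
    (fun u => (hdiff u).hasGradientAt) hlip xplus x
  rw [show y - x + z - xplus - (y - x) = -((x - z) + (xplus - x)) by abel] at hg_mono
  rw [show (2 : ℝ) • xplus - (y - x + z) - γ • gradient f xplus - zplus
      - ((2 : ℝ) • x - y - γ • gradient f x - z)
      = (2 : ℝ) • (xplus - x) + (x - z) - γ • (gradient f xplus - gradient f x) - (zplus - z)
      by module] at hh_mono
  have key := sq_norm_add_sub_le hγ.le hL hg_mono hh_mono hcoco
  rw [show x - z + (xplus - x) - (zplus - z) = xplus - zplus by abel,
    show xplus - x - (zplus - z) = xplus - zplus - (x - z) by abel] at key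
  simp only [← smul_sub, norm_smul, mul_pow]
  linear_combination ‖γ⁻¹‖ ^ 2 * key

/-- monotonicity of the gradient mapping. -/
theorem stmt_2 (p : ℕ) (hp : 0 < p) (γ : ℝ) (hγ : 0 < γ) (L : ℝ) (hL : 0 < L)
    (g h f : EuclideanSpace ℝ (Fin p) → ℝ)
    (hg : ConvexOn ℝ Set.univ g) (hh : ConvexOn ℝ Set.univ h)
    (hf : ConvexOn ℝ Set.univ f) (hfL : LSmooth L f)
    (y x z yplus xplus zplus : EuclideanSpace ℝ (Fin p))
    (hstep : IsSplitStep γ g h f y x z)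
    (hyplus : yplus = y - x + z)
    (hstepplus : IsSplitStep γ g h f yplus xplus zplus) :
    ‖γ⁻¹ • (xplus - zplus)‖ ^ 2 ≤
      ‖γ⁻¹ • (x - z)‖ ^ 2 -
        (1 - γ * L / 2) * ‖γ⁻¹ • (xplus - zplus) - γ⁻¹ • (x - z)‖ ^ 2 :=
  stmt_2_general p γ hγ L hL g h f hg hh hf hfL y x z yplus xplus zplus hstep hyplus hstepplus
end

section
/- Let p be a positive integer and let f : ℝ^p → ℝ be convex and L-smooth with L > 0. Then for all x, x̃, d ∈ ℝ^p, ⟨∇f(x) − ∇f(x̃), d − (x − x̃)⟩ ≤ (L/4)·‖d‖². -/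
open RealInnerProductSpace

/-! Convexity gives `f y ≥ f x + ⟪∇f x, y - x⟫` and `L`-smoothness gives the quadratic upper
bound `f y ≤ f x + ⟪∇f x, y - x⟫ + L/2 ‖y - x‖²`. Evaluating both at the gradient step
`y + L⁻¹ • (∇f x - ∇f y)` sharpens the lower bound by `‖∇f x - ∇f y‖² / (2L)`, and symmetrising
yields co-coercivity `‖∇f x - ∇f y‖² ≤ L ⟪∇f x - ∇f y, x - y⟫`. The claim then follows from
Cauchy–Schwarz and `a b - a² / L ≤ L b² / 4`. -/

section

variable {E : Type*} [NormedAddCommGroup E] [InnerProductSpace ℝ E] [CompleteSpace E]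
  {f : E → ℝ}

theorem hasDerivAt_comp_lineMap (x y : E) {t : ℝ}
    (hf : DifferentiableAt ℝ f (AffineMap.lineMap x y t)) :
    HasDerivAt (fun s : ℝ => f (AffineMap.lineMap x y s))
      ⟪gradient f (AffineMap.lineMap x y t), y - x⟫ t := by
  have h := hf.hasGradientAt.hasFDerivAt.comp_hasDerivAt t
    (AffineMap.hasDerivAt_lineMap (a := x) (b := y))
  rw [InnerProductSpace.toDual_apply_apply] at h
  exact h

theorem ConvexOn.add_inner_gradient_le (hf : ConvexOn ℝ Set.univ f) {x : E}
    (hfx : DifferentiableAt ℝ f x) (y : E) :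
    f x + ⟪gradient f x, y - x⟫ ≤ f y := by
  have hline : ConvexOn ℝ Set.univ (fun t : ℝ => f (AffineMap.lineMap x y t)) := by
    have h := hf.comp_affineMap (AffineMap.lineMap x y)
    rw [Set.preimage_univ] at h
    exact h
  have hderiv := hasDerivAt_comp_lineMap (f := f) x y (t := 0) (by simpa using hfx)
  have := hline.le_slope_of_hasDerivAt (Set.mem_univ 0) (Set.mem_univ 1) zero_lt_one hderiv
  simp only [slope_def_field, AffineMap.lineMap_apply_zero, AffineMap.lineMap_apply_one,
    sub_zero, div_one] at this
  linarith

theorem le_add_inner_gradient_add_sq_of_lipschitz_gradient {L : ℝ} (hf : Differentiable ℝ f)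
    (hlip : ∀ a b, ‖gradient f a - gradient f b‖ ≤ L * ‖a - b‖) (x y : E) :
    f y ≤ f x + ⟪gradient f x, y - x⟫ + L / 2 * ‖y - x‖ ^ 2 := by
  set φ : ℝ → ℝ := fun t =>
    f (AffineMap.lineMap x y t) - t * ⟪gradient f x, y - x⟫ - L / 2 * t ^ 2 * ‖y - x‖ ^ 2
  have hφ' : ∀ t, HasDerivAt φ
      (⟪gradient f (AffineMap.lineMap x y t) - gradient f x, y - x⟫ - L * t * ‖y - x‖ ^ 2) t := by
    intro t
    refine (((hasDerivAt_comp_lineMap x y (hf _)).sub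
      ((hasDerivAt_id t).mul_const _)).sub (((hasDerivAt_pow 2 t).const_mul (L / 2)).mul_const
        (‖y - x‖ ^ 2))).congr_deriv ?_
    rw [inner_sub_left]
    ring
  have hφ'_nonpos : ∀ t ∈ interior (Set.Ici (0 : ℝ)),
      ⟪gradient f (AffineMap.lineMap x y t) - gradient f x, y - x⟫ - L * t * ‖y - x‖ ^ 2 ≤ 0 := by
    intro t ht
    rw [interior_Ici, Set.mem_Ioi] at ht
    have hstep : ‖gradient f (AffineMap.lineMap x y t) - gradient f x‖ ≤ L * (t * ‖y - x‖) := by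
      simpa [AffineMap.lineMap_apply_module', norm_smul, abs_of_pos ht] using
        hlip (AffineMap.lineMap x y t) x
    calc _ ≤ ‖gradient f (AffineMap.lineMap x y t) - gradient f x‖ * ‖y - x‖
            - L * t * ‖y - x‖ ^ 2 := by gcongr; exact real_inner_le_norm _ _
      _ ≤ L * (t * ‖y - x‖) * ‖y - x‖ - L * t * ‖y - x‖ ^ 2 := by gcongr
      _ = 0 := by ring
  have hanti : AntitoneOn φ (Set.Ici 0) :=
    antitoneOn_of_hasDerivWithinAt_nonpos (convex_Ici 0)
      (fun t _ => (hφ' t).continuousAt.continuousWithinAt)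
      (fun t _ => (hφ' t).hasDerivWithinAt) hφ'_nonpos
  have := hanti Set.self_mem_Ici (Set.mem_Ici.mpr zero_le_one) zero_le_one
  simp only [φ, AffineMap.lineMap_apply_zero, AffineMap.lineMap_apply_one] at this
  linarith

theorem ConvexOn.add_inner_gradient_add_sq_le {L : ℝ} (hL : 0 < L) (hf : ConvexOn ℝ Set.univ f)
    (hfd : Differentiable ℝ f) (hlip : ∀ a b, ‖gradient f a - gradient f b‖ ≤ L * ‖a - b‖)
    (x y : E) :
    f x + ⟪gradient f x, y - x⟫ + 1 / (2 * L) * ‖gradient f x - gradient f y‖ ^ 2 ≤ f y := by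
  set g := gradient f x - gradient f y
  have hlower := hf.add_inner_gradient_le (hfd x) (y + L⁻¹ • g)
  have hupper := le_add_inner_gradient_add_sq_of_lipschitz_gradient hfd hlip y (y + L⁻¹ • g)
  have hg : L⁻¹ * ⟪gradient f x, g⟫ - L⁻¹ * ⟪gradient f y, g⟫ = L⁻¹ * ‖g‖ ^ 2 := by
    rw [← mul_sub, ← inner_sub_left, real_inner_self_eq_norm_sq]
  rw [add_sub_cancel_left, norm_smul, Real.norm_of_nonneg (inv_nonneg.mpr hL.le),
    inner_smul_right] at hupper
  rw [add_sub_right_comm, inner_add_right, inner_smul_right] at hlower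
  have hcoef : 1 / (2 * L) * ‖g‖ ^ 2 = L⁻¹ * ‖g‖ ^ 2 - L / 2 * (L⁻¹ * ‖g‖) ^ 2 := by
    field_simp
    ring
  linarith

theorem ConvexOn.sq_norm_sub_gradient_le {L : ℝ} (hL : 0 < L) (hf : ConvexOn ℝ Set.univ f)
    (hfd : Differentiable ℝ f) (hlip : ∀ a b, ‖gradient f a - gradient f b‖ ≤ L * ‖a - b‖)
    (x y : E) :
    ‖gradient f x - gradient f y‖ ^ 2 ≤ L * ⟪gradient f x - gradient f y, x - y⟫ := by
  have hxy := hf.add_inner_gradient_add_sq_le hL hfd hlip x y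
  have hyx := hf.add_inner_gradient_add_sq_le hL hfd hlip y x
  rw [norm_sub_rev] at hyx
  rw [← neg_sub x y, inner_neg_right] at hxy
  have hsum : 2 * (1 / (2 * L) * ‖gradient f x - gradient f y‖ ^ 2)
      ≤ ⟪gradient f x - gradient f y, x - y⟫ := by
    rw [inner_sub_left]
    linarith
  calc ‖gradient f x - gradient f y‖ ^ 2
      = L * (2 * (1 / (2 * L) * ‖gradient f x - gradient f y‖ ^ 2)) := by field_simp
    _ ≤ L * ⟪gradient f x - gradient f y, x - y⟫ := by gcongr

end

theorem stmt_6_general (p : ℕ) (L : ℝ) (hL : 0 < L)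
    (f : EuclideanSpace ℝ (Fin p) → ℝ)
    (hf : ConvexOn ℝ Set.univ f) (hfL : LSmooth L f) :
    ∀ x xt d : EuclideanSpace ℝ (Fin p),
      ⟪gradient f x - gradient f xt, d - (x - xt)⟫ ≤ (L / 4) * ‖d‖ ^ 2 := by
  intro x xt d
  set g := gradient f x - gradient f xt
  have hcoco : ‖g‖ ^ 2 ≤ L * ⟪g, x - xt⟫ := hf.sq_norm_sub_gradient_le hL hfL.1 hfL.2 x xt
  have hcs : ⟪g, d⟫ ≤ ‖g‖ * ‖d‖ := real_inner_le_norm g d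
  rw [inner_sub_right]
  nlinarith [sq_nonneg (2 * ‖g‖ - L * ‖d‖)]

/-- a consequence of co-coercivity for L-smooth convex functions. -/
theorem stmt_6 (p : ℕ) (hp : 0 < p) (L : ℝ) (hL : 0 < L)
    (f : EuclideanSpace ℝ (Fin p) → ℝ)
    (hf : ConvexOn ℝ Set.univ f) (hfL : LSmooth L f) :
    ∀ x xt d : EuclideanSpace ℝ (Fin p),
      ⟪gradient f x - gradient f xt, d - (x - xt)⟫ ≤ (L / 4) * ‖d‖ ^ 2 :=
  stmt_6_general p L hL f hf hfL
end

section
/- Let p be a positive integer and let f : ℝ^p → ℝ be convex and L-smooth with L > 0. Then for all x, y ∈ ℝ^p, ⟨∇f(x) − ∇f(y), x − y⟩ ≥ (1/L)·‖∇f(x) − ∇f(y)‖² (co-coercivity of the gradient). -/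
open RealInnerProductSpace

/-!
Both sides of the inequality come from comparing `f` with its tangent planes. Convexity puts `f`
above every tangent plane, and the Lipschitz gradient puts it below the tangent plane plus
`L/2 ‖·‖²`. At the point `z = y - L⁻¹ (∇f y - ∇f x)` the lower bound from `x` and the upper bound
from `y` together give
`f y ≥ f x + ⟪∇f x, y - x⟫ + (2L)⁻¹ ‖∇f y - ∇f x‖²`.
Adding this inequality to the one with `x` and `y` swapped gives co-coercivity.
-/

open Set
open scoped Gradient

theorem ConvexOn.add_fderiv_sub_le {E : Type*} [NormedAddCommGroup E] [NormedSpace ℝ E]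
    {s : Set E} {f : E → ℝ} (hf : ConvexOn ℝ s f) {x y : E} (hx : x ∈ s) (hy : y ∈ s)
    (hfx : DifferentiableAt ℝ f x) :
    f x + fderiv ℝ f x (y - x) ≤ f y := by
  set ℓ : ℝ →ᵃ[ℝ] E := AffineMap.lineMap x y
  have hℓ0 : ℓ 0 = x := AffineMap.lineMap_apply_zero x y
  have hℓ1 : ℓ 1 = y := AffineMap.lineMap_apply_one x y
  have hline : ConvexOn ℝ (ℓ ⁻¹' s) (f ∘ ℓ) := hf.comp_affineMap ℓ
  have hderiv : HasDerivAt (f ∘ ℓ) (fderiv ℝ f x (y - x)) 0 :=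
    hfx.hasFDerivAt.comp_hasDerivAt_of_eq 0 AffineMap.hasDerivAt_lineMap hℓ0.symm
  have := hline.le_slope_of_hasDerivAt (by simpa [hℓ0]) (by simpa [hℓ1]) zero_lt_one hderiv
  rw [slope_def_field, Function.comp_apply, Function.comp_apply, hℓ0, hℓ1] at this
  linarith

section InnerProductSpace

variable {E : Type*} [NormedAddCommGroup E] [InnerProductSpace ℝ E] [CompleteSpace E]
  {f : E → ℝ} {L : ℝ}

theorem ConvexOn.add_inner_gradient_sub_le {s : Set E} (hf : ConvexOn ℝ s f) {x y : E}
    (hx : x ∈ s) (hy : y ∈ s) (hfx : DifferentiableAt ℝ f x) :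
    f x + ⟪∇ f x, y - x⟫ ≤ f y := by
  rw [inner_gradient_left]
  exact hf.add_fderiv_sub_le hx hy hfx

theorem Differentiable.le_add_inner_gradient_sub_add_sq (hf : Differentiable ℝ f)
    (hlip : ∀ a b, ‖∇ f a - ∇ f b‖ ≤ L * ‖a - b‖) (x y : E) :
    f y ≤ f x + ⟪∇ f x, y - x⟫ + L / 2 * ‖y - x‖ ^ 2 := by
  set v := y - x
  set φ : ℝ → ℝ := fun t ↦ f (x + t • v) - t * ⟪∇ f x, v⟫ - L / 2 * t ^ 2 * ‖v‖ ^ 2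
  have hφ : ∀ t, HasDerivAt φ (⟪∇ f (x + t • v) - ∇ f x, v⟫ - L * t * ‖v‖ ^ 2) t := by
    intro t
    have hline : HasDerivAt (fun t : ℝ ↦ x + t • v) v t := by
      simpa using ((hasDerivAt_id t).smul_const v).const_add x
    have hfline := (hf (x + t • v)).hasFDerivAt.comp_hasDerivAt t hline
    rw [← inner_gradient_left] at hfline
    refine ((hfline.sub ((hasDerivAt_id t).mul_const ⟪∇ f x, v⟫)).sub
      (((hasDerivAt_pow 2 t).const_mul (L / 2)).mul_const (‖v‖ ^ 2))).congr_deriv ?_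
    rw [inner_sub_left]
    push_cast
    ring
  have hφ' : ∀ t, 0 ≤ t → ⟪∇ f (x + t • v) - ∇ f x, v⟫ - L * t * ‖v‖ ^ 2 ≤ 0 := by
    intro t ht
    suffices ⟪∇ f (x + t • v) - ∇ f x, v⟫ ≤ L * t * ‖v‖ ^ 2 by linarith
    calc ⟪∇ f (x + t • v) - ∇ f x, v⟫ ≤ ‖∇ f (x + t • v) - ∇ f x‖ * ‖v‖ := real_inner_le_norm _ _
      _ ≤ L * ‖t • v‖ * ‖v‖ := by
          gcongr
          simpa using hlip (x + t • v) x
      _ = L * t * ‖v‖ ^ 2 := by rw [norm_smul, Real.norm_of_nonneg ht]; ring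
  have hanti : AntitoneOn φ (Ici 0) :=
    antitoneOn_of_hasDerivWithinAt_nonpos (convex_Ici 0)
      (fun t _ ↦ (hφ t).continuousAt.continuousWithinAt)
      (fun t _ ↦ (hφ t).hasDerivWithinAt)
      (fun t ht ↦ hφ' t (interior_subset ht))
  have hφ01 := hanti self_mem_Ici (mem_Ici.2 zero_le_one) zero_le_one
  have hxv : x + v = y := add_sub_cancel x y
  simp only [φ, one_smul, zero_smul, add_zero, hxv, one_pow, one_mul, mul_one, zero_mul,
    sub_zero, ne_eq, OfNat.ofNat_ne_zero, not_false_eq_true, zero_pow, mul_zero] at hφ01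
  linarith

theorem ConvexOn.add_inner_gradient_sub_add_sq_le (hf : ConvexOn ℝ univ f)
    (hd : Differentiable ℝ f) (hL : 0 < L) (hlip : ∀ a b, ‖∇ f a - ∇ f b‖ ≤ L * ‖a - b‖)
    (x y : E) :
    f x + ⟪∇ f x, y - x⟫ + (2 * L)⁻¹ * ‖∇ f y - ∇ f x‖ ^ 2 ≤ f y := by
  set g := ∇ f y - ∇ f x
  set z := y - L⁻¹ • g
  have hlower : f x + ⟪∇ f x, z - x⟫ ≤ f z :=
    hf.add_inner_gradient_sub_le (mem_univ x) (mem_univ z) (hd x)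
  have hupper : f z ≤ f y + ⟪∇ f y, z - y⟫ + L / 2 * ‖z - y‖ ^ 2 :=
    hd.le_add_inner_gradient_sub_add_sq hlip y z
  have hzx : z - x = (y - x) - L⁻¹ • g := sub_right_comm y _ x
  have hzy : z - y = -(L⁻¹ • g) := sub_sub_cancel_left y _
  rw [hzx, inner_sub_right, inner_smul_right] at hlower
  rw [hzy, inner_neg_right, inner_smul_right, norm_neg, norm_smul,
    Real.norm_of_nonneg (inv_nonneg.2 hL.le)] at hupper
  have hg : ⟪∇ f y, g⟫ - ⟪∇ f x, g⟫ = ‖g‖ ^ 2 := by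
    rw [← inner_sub_left, real_inner_self_eq_norm_sq]
  have hL' : L / 2 * (L⁻¹ * ‖g‖) ^ 2 = (2 * L)⁻¹ * ‖g‖ ^ 2 := by
    field_simp
  linear_combination hlower + hupper - L⁻¹ * hg + hL'

theorem ConvexOn.inv_mul_sq_norm_gradient_sub_le_inner (hf : ConvexOn ℝ univ f)
    (hd : Differentiable ℝ f) (hL : 0 < L) (hlip : ∀ a b, ‖∇ f a - ∇ f b‖ ≤ L * ‖a - b‖)
    (x y : E) :
    L⁻¹ * ‖∇ f x - ∇ f y‖ ^ 2 ≤ ⟪∇ f x - ∇ f y, x - y⟫ := by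
  have hxy := hf.add_inner_gradient_sub_add_sq_le hd hL hlip x y
  have hyx := hf.add_inner_gradient_sub_add_sq_le hd hL hlip y x
  rw [norm_sub_rev] at hxy
  have hinner : ⟪∇ f x - ∇ f y, x - y⟫ = -⟪∇ f x, y - x⟫ - ⟪∇ f y, x - y⟫ := by
    rw [inner_sub_left, ← neg_sub y x, inner_neg_right]
  linear_combination hxy + hyx - hinner

end InnerProductSpace

theorem stmt_7_general (p : ℕ) (L : ℝ) (hL : 0 < L)
    (f : EuclideanSpace ℝ (Fin p) → ℝ)
    (hf : ConvexOn ℝ Set.univ f) (hfL : LSmooth L f) :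
    ∀ x y : EuclideanSpace ℝ (Fin p),
      ⟪gradient f x - gradient f y, x - y⟫ ≥
        (1 / L) * ‖gradient f x - gradient f y‖ ^ 2 := by
  intro x y
  rw [ge_iff_le, one_div]
  exact hf.inv_mul_sq_norm_gradient_sub_le_inner hfL.1 hL hfL.2 x y

/-- co-coercivity of the gradient of an L-smooth convex function. -/
theorem stmt_7 (p : ℕ) (hp : 0 < p) (L : ℝ) (hL : 0 < L)
    (f : EuclideanSpace ℝ (Fin p) → ℝ)
    (hf : ConvexOn ℝ Set.univ f) (hfL : LSmooth L f) :
    ∀ x y : EuclideanSpace ℝ (Fin p),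
      ⟪gradient f x - gradient f y, x - y⟫ ≥
        (1 / L) * ‖gradient f x - gradient f y‖ ^ 2 :=
  stmt_7_general p L hL f hf hfL
end

section
/- Let p be a positive integer, γ > 0, and let g, h : ℝ^p → ℝ be convex. Let y, ỹ ∈ ℝ^p, let x be a proximal point of g at y with parameter γ and z a proximal point of h at 2x − y with parameter γ; similarly let x̃ be a proximal point of g at ỹ with parameter γ and z̃ a proximal point of h at 2x̃ − ỹ with parameter γ. Then ⟨(x − z) − (x̃ − z̃), y − ỹ⟩ ≥ ‖(x − z) − (x̃ − z̃)‖²; that is, when f = 0 the gradient mapping y ↦ (x − z)/γ of the three-operator splitting (i.e., the Douglas–Rachford case) is firmly nonexpansive. -/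
open RealInnerProductSpace

open Filter Topology

/-! The optimality condition of a proximal step says that `(y - x) / γ` is a subgradient of the
function at `x = prox y`; adding the subgradient inequalities at two points shows that the residual
`y - prox y` is monotone. With `a = x - x̃`, `b = z - z̃` and `d = y - ỹ`, the two monotonicity
inequalities for `g` and `h` read `0 ≤ ⟪d - a, a⟫` and `0 ≤ ⟪2a - d - b, b⟫`, and their sum is
exactly `⟪a - b, d⟫ - ‖a - b‖²`. -/

lemma nonneg_of_forall_nonneg_add_mul {a b : ℝ}
    (h : ∀ t : ℝ, 0 < t → t ≤ 1 → 0 ≤ a + t * b) : 0 ≤ a := by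
  have hlim : Tendsto (fun t : ℝ => a + t * b) (𝓝[>] 0) (𝓝 a) := by
    have hcont : Continuous fun t : ℝ => a + t * b := by fun_prop
    simpa using (hcont.tendsto 0).mono_left nhdsWithin_le_nhds
  refine ge_of_tendsto hlim ?_
  filter_upwards [Ioc_mem_nhdsGT one_pos] with t ht using h t ht.1 ht.2

section Prox

variable {E : Type*} [NormedAddCommGroup E] [InnerProductSpace ℝ E]

lemma ConvexOn.add_inner_le_of_prox {γ : ℝ} (hγ : 0 < γ) {φ : E → ℝ}
    (hφ : ConvexOn ℝ Set.univ φ) {y x : E}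
    (hx : ∀ u : E, φ x + (1 / (2 * γ)) * ‖x - y‖ ^ 2 ≤ φ u + (1 / (2 * γ)) * ‖u - y‖ ^ 2)
    (w : E) : φ x + γ⁻¹ * ⟪y - x, w - x⟫ ≤ φ w := by
  set c := 1 / (2 * γ)
  suffices 0 ≤ φ w - φ x + 2 * c * ⟪x - y, w - x⟫ by
    have hc : 2 * c = γ⁻¹ := by simp only [c]; field_simp
    have hflip : ⟪y - x, w - x⟫ = -⟪x - y, w - x⟫ := by
      rw [← inner_neg_left, neg_sub]
    rw [hflip, ← hc]
    linarith
  -- compare `x` with `x + t • (w - x)`, divide by `t`, and let `t → 0⁺`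
  refine nonneg_of_forall_nonneg_add_mul (b := c * ‖w - x‖ ^ 2) fun t ht ht1 => ?_
  have hconv : φ (x + t • (w - x)) ≤ (1 - t) * φ x + t * φ w := by
    have := hφ.2 (Set.mem_univ x) (Set.mem_univ w) (by linarith : (0 : ℝ) ≤ 1 - t) ht.le
      (by ring)
    rwa [show (1 - t) • x + t • w = x + t • (w - x) by module] at this
  have hnorm : ‖x + t • (w - x) - y‖ ^ 2
      = ‖x - y‖ ^ 2 + 2 * t * ⟪x - y, w - x⟫ + t ^ 2 * ‖w - x‖ ^ 2 := by
    rw [show x + t • (w - x) - y = (x - y) + t • (w - x) by abel, norm_add_sq_real,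
      real_inner_smul_right, norm_smul, mul_pow, Real.norm_eq_abs, sq_abs]
    ring
  have hmin := hx (x + t • (w - x))
  rw [hnorm] at hmin
  have : 0 ≤ t * (φ w - φ x + 2 * c * ⟪x - y, w - x⟫ + t * (c * ‖w - x‖ ^ 2)) := by
    nlinarith
  exact nonneg_of_mul_nonneg_right (by linarith) ht

lemma ConvexOn.inner_prox_residual_nonneg {γ : ℝ} (hγ : 0 < γ) {φ : E → ℝ}
    (hφ : ConvexOn ℝ Set.univ φ) {y x y' x' : E}
    (hx : ∀ u : E, φ x + (1 / (2 * γ)) * ‖x - y‖ ^ 2 ≤ φ u + (1 / (2 * γ)) * ‖u - y‖ ^ 2)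
    (hx' : ∀ u : E, φ x' + (1 / (2 * γ)) * ‖x' - y'‖ ^ 2 ≤ φ u + (1 / (2 * γ)) * ‖u - y'‖ ^ 2) :
    0 ≤ ⟪(y - y') - (x - x'), x - x'⟫ := by
  have h := hφ.add_inner_le_of_prox hγ hx x'
  have h' := hφ.add_inner_le_of_prox hγ hx' x
  have hsum : γ⁻¹ * ⟪(y - y') - (x - x'), x - x'⟫
      = -(γ⁻¹ * ⟪y - x, x' - x⟫ + γ⁻¹ * ⟪y' - x', x - x'⟫) := by
    rw [show (y - y') - (x - x') = (y - x) - (y' - x') by abel, inner_sub_left,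
      ← neg_sub x x', inner_neg_right]
    ring
  have : 0 ≤ γ⁻¹ * ⟪(y - y') - (x - x'), x - x'⟫ := by linarith
  exact nonneg_of_mul_nonneg_right this (inv_pos.mpr hγ)

end Prox

lemma norm_sub_sq_le_inner_of_inner_nonneg {F : Type*} [NormedAddCommGroup F]
    [InnerProductSpace ℝ F] {a b d : F}
    (ha : 0 ≤ ⟪d - a, a⟫) (hb : 0 ≤ ⟪(2 : ℝ) • a - d - b, b⟫) :
    ‖a - b‖ ^ 2 ≤ ⟪a - b, d⟫ := by
  rw [← real_inner_self_eq_norm_sq]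
  simp only [inner_sub_left, inner_sub_right, real_inner_smul_left] at ha hb ⊢
  linarith [real_inner_comm a b, real_inner_comm a d, real_inner_comm b d]

theorem stmt_9_general (p : ℕ) (γ : ℝ) (hγ : 0 < γ)
    (g h : EuclideanSpace ℝ (Fin p) → ℝ)
    (hg : ConvexOn ℝ Set.univ g) (hh : ConvexOn ℝ Set.univ h)
    (y yt x z xt zt : EuclideanSpace ℝ (Fin p))
    (hx : IsProxPt γ g y x) (hz : IsProxPt γ h ((2 : ℝ) • x - y) z)
    (hxt : IsProxPt γ g yt xt) (hzt : IsProxPt γ h ((2 : ℝ) • xt - yt) zt) :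
    ⟪(x - z) - (xt - zt), y - yt⟫ ≥ ‖(x - z) - (xt - zt)‖ ^ 2 := by
  have hgmono := hg.inner_prox_residual_nonneg hγ hx hxt
  have hhmono := hh.inner_prox_residual_nonneg hγ hz hzt
  rw [show (x - z) - (xt - zt) = (x - xt) - (z - zt) by abel]
  refine norm_sub_sq_le_inner_of_inner_nonneg hgmono ?_
  convert hhmono using 2
  module

/-- firm nonexpansiveness in the Douglas–Rachford case (f = 0). -/
theorem stmt_9 (p : ℕ) (hp : 0 < p) (γ : ℝ) (hγ : 0 < γ)
    (g h : EuclideanSpace ℝ (Fin p) → ℝ)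
    (hg : ConvexOn ℝ Set.univ g) (hh : ConvexOn ℝ Set.univ h)
    (y yt x z xt zt : EuclideanSpace ℝ (Fin p))
    (hx : IsProxPt γ g y x) (hz : IsProxPt γ h ((2 : ℝ) • x - y) z)
    (hxt : IsProxPt γ g yt xt) (hzt : IsProxPt γ h ((2 : ℝ) • xt - yt) zt) :
    ⟪(x - z) - (xt - zt), y - yt⟫ ≥ ‖(x - z) - (xt - zt)‖ ^ 2 :=
  stmt_9_general p γ hγ g h hg hh y yt x z xt zt hx hz hxt hzt
end
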